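/- Let X̂ be an n×n positive semidefinite matrix and θ ≥ 0. For any positive semidefinite X with Bures–Wasserstein distance B(X, X̂) ≤ θ, the eigenvalues of X satisfy (max{0, sqrt(λ_min(X̂)) − θ})² ≤ λ_min(X) ≤ λ_max(X) ≤ (sqrt(λ_max(X̂)) + θ)². -/

import Mathlib

open Matrix

noncomputable section

namespace Matrix.PosSemidef

open scoped ComplexOrder

variable {n𝕜 : Type*} [Fintype n𝕜] [DecidableEq n𝕜] {𝕜 : Type*} [RCLike 𝕜]
  {A : Matrix n𝕜 n𝕜 𝕜}

/-- The square root of a positive semidefinite matrix (Mathlib's definition of Dec 2024). -/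
def sqrt (hA : PosSemidef A) : Matrix n𝕜 n𝕜 𝕜 :=
  (hA.1.eigenvectorUnitary : Matrix n𝕜 n𝕜 𝕜) *
    diagonal (((↑) : ℝ → 𝕜) ∘ (√·) ∘ hA.1.eigenvalues) *
    (star hA.1.eigenvectorUnitary : Matrix n𝕜 n𝕜 𝕜)

lemma posSemidef_sqrt (hA : PosSemidef A) : PosSemidef hA.sqrt := by
  unfold sqrt
  have hd : (diagonal (((↑) : ℝ → 𝕜) ∘ (√·) ∘ hA.1.eigenvalues)).PosSemidef := by
    rw [posSemidef_diagonal_iff]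
    intro i
    simp [Real.sqrt_nonneg]
  have := hd.mul_mul_conjTranspose_same (hA.1.eigenvectorUnitary : Matrix n𝕜 n𝕜 𝕜)
  simpa [Matrix.star_eq_conjTranspose] using this

end Matrix.PosSemidef

namespace Matrix.PosSemidef
open scoped MatrixOrder

lemma sqrt_eq_cfc' {n : ℕ} {A : Matrix (Fin n) (Fin n) ℝ} (hA : A.PosSemidef) :
    hA.sqrt = CFC.sqrt A := by
  rw [CFC.sqrt_eq_real_sqrt A hA.nonneg, cfcₙ_eq_cfc (hf0 := by simp), hA.1.cfc_eq,
    IsHermitian.cfc, Unitary.conjStarAlgAut_apply]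
  rfl

lemma sqrt_mul_self {n : ℕ} {A : Matrix (Fin n) (Fin n) ℝ} (hA : A.PosSemidef) :
    hA.sqrt * hA.sqrt = A := by
  rw [sqrt_eq_cfc']; exact CFC.sqrt_mul_sqrt_self A hA.nonneg

lemma eq_sqrt_of_sq_eq {n : ℕ} {A B : Matrix (Fin n) (Fin n) ℝ} (hB : B.PosSemidef)
    (hA : A.PosSemidef) (h : B ^ 2 = A) : B = hA.sqrt := by
  rw [sqrt_eq_cfc']
  exact (CFC.sqrt_unique (by rw [← pow_two]; exact h) hB.nonneg).symm

end Matrix.PosSemidef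

/-- `X̂^{1/2} * X * X̂^{1/2}` is positive semidefinite when `X`, `X̂` are. -/
lemma midPosSemidef {n : ℕ} {X Xhat : Matrix (Fin n) (Fin n) ℝ} (hX : X.PosSemidef)
    (hXhat : Xhat.PosSemidef) : (hXhat.sqrt * X * hXhat.sqrt).PosSemidef := by
  have h := hX.mul_mul_conjTranspose_same hXhat.sqrt
  rwa [hXhat.posSemidef_sqrt.isHermitian.eq] at h

/-- Bures–Wasserstein distance
`B(X,X̂) = sqrt (Tr[X + X̂ - 2 (X̂^{1/2} X X̂^{1/2})^{1/2}])`. -/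
def bwDist {n : ℕ} {X Xhat : Matrix (Fin n) (Fin n) ℝ}
    (hX : X.PosSemidef) (hXhat : Xhat.PosSemidef) : ℝ :=
  Real.sqrt ((X + Xhat - (2 : ℝ) • (midPosSemidef hX hXhat).sqrt).trace)

/-- Smallest eigenvalue of a Hermitian matrix. -/
def lamMin {n : ℕ} {A : Matrix (Fin n) (Fin n) ℝ} (hA : A.IsHermitian) : ℝ :=
  ⨅ i, hA.eigenvalues i

/-- Largest eigenvalue of a Hermitian matrix. -/
def lamMax {n : ℕ} {A : Matrix (Fin n) (Fin n) ℝ} (hA : A.IsHermitian) : ℝ :=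
  ⨆ i, hA.eigenvalues i


namespace BWAux
variable {n : ℕ}

def nrm (u : Fin n → ℝ) : ℝ := Real.sqrt (u ⬝ᵥ u)

lemma dp_self_nonneg (u : Fin n → ℝ) : 0 ≤ u ⬝ᵥ u :=
  Finset.sum_nonneg fun i _ => mul_self_nonneg _

lemma nrm_nonneg (u : Fin n → ℝ) : 0 ≤ nrm u := Real.sqrt_nonneg _

lemma nrm_sq (u : Fin n → ℝ) : nrm u ^ 2 = u ⬝ᵥ u := Real.sq_sqrt (dp_self_nonneg u)

lemma dp_le_nrm (u w : Fin n → ℝ) : u ⬝ᵥ w ≤ nrm u * nrm w := by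
  have h := Finset.sum_mul_sq_le_sq_mul_sq Finset.univ u w
  have h2 : u ⬝ᵥ w ≤ Real.sqrt ((u ⬝ᵥ u) * (w ⬝ᵥ w)) := by
    have : (u ⬝ᵥ w) ^ 2 ≤ (u ⬝ᵥ u) * (w ⬝ᵥ w) := by
      simpa [dotProduct, pow_two, Finset.mul_sum, mul_comm, mul_assoc, mul_left_comm] using h
    calc u ⬝ᵥ w ≤ |u ⬝ᵥ w| := le_abs_self _
    _ = Real.sqrt ((u ⬝ᵥ w) ^ 2) := (Real.sqrt_sq_eq_abs _).symm
    _ ≤ _ := Real.sqrt_le_sqrt this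
  rwa [Real.sqrt_mul (dp_self_nonneg u)] at h2

lemma nrm_triangle (a b : Fin n → ℝ) : nrm (a + b) ≤ nrm a + nrm b := by
  have h : (a + b) ⬝ᵥ (a + b) ≤ (nrm a + nrm b) ^ 2 := by
    have := dp_le_nrm a b
    have h2 := nrm_sq a; have h3 := nrm_sq b
    rw [add_dotProduct, dotProduct_add, dotProduct_add, dotProduct_comm b a]
    nlinarith [nrm_nonneg a, nrm_nonneg b]
  calc nrm (a + b) ≤ Real.sqrt ((nrm a + nrm b) ^ 2) := Real.sqrt_le_sqrt h
  _ = |nrm a + nrm b| := Real.sqrt_sq_eq_abs _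
  _ = nrm a + nrm b := abs_of_nonneg (add_nonneg (nrm_nonneg a) (nrm_nonneg b))

lemma dp_transpose (B : Matrix (Fin n) (Fin n) ℝ) (y w : Fin n → ℝ) :
    y ⬝ᵥ (Bᵀ *ᵥ w) = (B *ᵥ y) ⬝ᵥ w := by
  rw [mulVec_transpose, dotProduct_comm, ← dotProduct_mulVec, dotProduct_comm]

lemma ct_eq (B : Matrix (Fin n) (Fin n) ℝ) : Bᴴ = Bᵀ := by
  ext i j; simp [conjTranspose_apply]

lemma mulVec_sq (B : Matrix (Fin n) (Fin n) ℝ) (y : Fin n → ℝ) :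
    (B *ᵥ y) ⬝ᵥ (B *ᵥ y) = y ⬝ᵥ ((Bᴴ * B) *ᵥ y) := by
  rw [ct_eq, ← mulVec_mulVec, dp_transpose, dotProduct_comm]

lemma psd_dp {P : Matrix (Fin n) (Fin n) ℝ} (hP : P.PosSemidef) (y : Fin n → ℝ) :
    0 ≤ y ⬝ᵥ (P *ᵥ y) := by
  have := hP.dotProduct_mulVec_nonneg y
  simpa using this



lemma polar (A : Matrix (Fin n) (Fin n) ℝ) :
    ∃ W : Matrix (Fin n) (Fin n) ℝ,
      (∀ u, (Wᴴ *ᵥ u) ⬝ᵥ (Wᴴ *ᵥ u) ≤ u ⬝ᵥ u) ∧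
      Wᴴ * A = (posSemidef_conjTranspose_mul_self A).sqrt ∧
      (posSemidef_self_mul_conjTranspose A).sqrt.trace
        = (posSemidef_conjTranspose_mul_self A).sqrt.trace := by
  classical
  have hM : (Aᴴ * A).PosSemidef := posSemidef_conjTranspose_mul_self A
  set M := Aᴴ * A with hMdef
  set μ := hM.1.eigenvalues with hμdef
  have hμ : ∀ i, 0 ≤ μ i := hM.eigenvalues_nonneg
  set U : Matrix (Fin n) (Fin n) ℝ := (hM.1.eigenvectorUnitary : Matrix (Fin n) (Fin n) ℝ) with hUdef
  have hU1 : Uᴴ * U = 1 := by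
    have := mem_unitaryGroup_iff'.mp hM.1.eigenvectorUnitary.2
    rwa [star_eq_conjTranspose] at this
  have hU2 : U * Uᴴ = 1 := by
    have := mem_unitaryGroup_iff.mp hM.1.eigenvectorUnitary.2
    rwa [star_eq_conjTranspose] at this
  set F : (Fin n → ℝ) → Matrix (Fin n) (Fin n) ℝ :=
    fun f => U * diagonal f * Uᴴ with hFdef
  have spec : M = F μ := by
    have h := hM.1.spectral_theorem
    rw [RCLike.ofReal_real_eq_id] at h
    rw [hFdef]
    simpa [star_eq_conjTranspose] using h
  have hFmul : ∀ f g, F f * F g = F (fun i => f i * g i) := by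
    intro f g
    simp only [hFdef]
    simp only [Matrix.mul_assoc]
    rw [← Matrix.mul_assoc Uᴴ U, hU1, Matrix.one_mul,
      ← Matrix.mul_assoc (diagonal f) (diagonal g), diagonal_mul_diagonal]
  have hFtrace : ∀ f, (F f).trace = ∑ i, f i := by
    intro f
    simp only [hFdef]
    rw [trace_mul_comm, ← Matrix.mul_assoc, hU1, Matrix.one_mul, trace_diagonal]
  have hFherm : ∀ f, (F f)ᴴ = F f := by
    intro f
    simp only [hFdef]
    rw [conjTranspose_mul, conjTranspose_mul, diagonal_conjTranspose,
      conjTranspose_conjTranspose]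
    have : star f = f := funext fun i => star_trivial _
    rw [this, Matrix.mul_assoc]
  have hFpsd : ∀ f, (∀ i, 0 ≤ f i) → (F f).PosSemidef := by
    intro f hf
    exact (posSemidef_diagonal_iff.mpr hf).mul_mul_conjTranspose_same U
  have hFone : F (fun _ => 1) = 1 := by
    simp only [hFdef, diagonal_one, Matrix.mul_one, hU2]
  have hFzero : F (fun _ => 0) = 0 := by
    simp only [hFdef, diagonal_zero, Matrix.mul_zero, Matrix.zero_mul]
  have hFsub : ∀ f g, F f - F g = F (fun i => f i - g i) := by
    intro f g
    simp only [hFdef]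
    rw [← Matrix.sub_mul, ← Matrix.mul_sub, ← diagonal_sub]
  -- spectral functions
  set sμ : Fin n → ℝ := fun i => Real.sqrt (μ i) with hsμdef
  set g : Fin n → ℝ := fun i => if μ i = 0 then 0 else (Real.sqrt (μ i))⁻¹ with hgdef
  set q : Fin n → ℝ := fun i => if μ i = 0 then 0 else 1 with hqdef
  have hgnn : ∀ i, 0 ≤ g i := by
    intro i; simp only [hgdef]; split <;> positivity
  have hsne : ∀ i, μ i ≠ 0 → Real.sqrt (μ i) ≠ 0 := fun i h =>
    Real.sqrt_ne_zero'.mpr (lt_of_le_of_ne (hμ i) (Ne.symm h))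
  have hgμ : ∀ i, g i * μ i = sμ i := by
    intro i; simp only [hgdef, hsμdef]
    by_cases h : μ i = 0
    · simp [h]
    · rw [if_neg h, inv_mul_eq_div, div_eq_iff (hsne i h)]
      exact (Real.mul_self_sqrt (hμ i)).symm
  have hgμg : ∀ i, g i * μ i * g i = q i := by
    intro i
    rw [hgμ i]
    simp only [hsμdef, hgdef, hqdef]
    by_cases h : μ i = 0
    · simp only [if_pos h, mul_zero]
    · rw [if_neg h, if_neg h]
      exact mul_inv_cancel₀ (hsne i h)
  -- R := F sμ is the sqrt of M
  have hRM : F sμ * F sμ = M := by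
    rw [hFmul, show (fun i => sμ i * sμ i) = μ from funext fun i => Real.mul_self_sqrt (hμ i)]
    exact spec.symm
  have hRpsd : (F sμ).PosSemidef := hFpsd _ (fun i => Real.sqrt_nonneg _)
  have hRsqrt : F sμ = hM.sqrt := hRpsd.eq_sqrt_of_sq_eq hM (by rw [pow_two]; exact hRM)
  set W := A * F g with hWdef
  have hWH : Wᴴ = F g * Aᴴ := by rw [hWdef, conjTranspose_mul, hFherm]
  have hWA : Wᴴ * A = F sμ := by
    rw [hWH, Matrix.mul_assoc, ← hMdef, spec, hFmul,
      show (fun i => g i * μ i) = sμ from funext hgμ]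
  have hWW : Wᴴ * W = F q := by
    rw [hWH, hWdef, Matrix.mul_assoc, ← Matrix.mul_assoc Aᴴ A (F g), ← hMdef, spec,
      hFmul μ g, hFmul g _,
      show (fun i => g i * (μ i * g i)) = q from funext fun i => by rw [← hgμg i]; ring]
  have hE : (1 : Matrix (Fin n) (Fin n) ℝ) - F q = F (fun i => 1 - q i) := by
    rw [← hFone, hFsub]
  have hIPpsd : ((1 : Matrix (Fin n) (Fin n) ℝ) - F q).PosSemidef := by
    rw [hE]
    refine hFpsd _ fun i => ?_
    simp only [hqdef]
    split <;> norm_num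
  have hWcon : ∀ y, (W *ᵥ y) ⬝ᵥ (W *ᵥ y) ≤ y ⬝ᵥ y := by
    intro y
    rw [mulVec_sq, hWW]
    have h0 := psd_dp hIPpsd y
    rw [sub_mulVec, one_mulVec, dotProduct_sub] at h0
    linarith
  have hWHcon : ∀ u, (Wᴴ *ᵥ u) ⬝ᵥ (Wᴴ *ᵥ u) ≤ u ⬝ᵥ u := by
    intro u
    set y := Wᴴ *ᵥ u with hy
    have h1 : y ⬝ᵥ y = (W *ᵥ y) ⬝ᵥ u := by
      calc y ⬝ᵥ y = y ⬝ᵥ (Wᵀ *ᵥ u) := by rw [← ct_eq, ← hy]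
      _ = (W *ᵥ y) ⬝ᵥ u := dp_transpose W y u
    have h2 : y ⬝ᵥ y ≤ nrm y * nrm u := by
      rw [h1]
      refine le_trans (dp_le_nrm _ _) (mul_le_mul_of_nonneg_right ?_ (nrm_nonneg u))
      exact Real.sqrt_le_sqrt (hWcon y)
    rcases eq_or_lt_of_le (nrm_nonneg y) with h0 | h0
    · have hz : y ⬝ᵥ y = 0 := by rw [← nrm_sq y, ← h0]; ring
      rw [hz]; exact dp_self_nonneg u
    · have h3 : nrm y ≤ nrm u := by
        have hyy : nrm y * nrm y ≤ nrm y * nrm u := by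
          rw [← pow_two, nrm_sq y]; exact h2
        exact (mul_le_mul_iff_right₀ h0).mp hyy
      rw [← nrm_sq y, ← nrm_sq u]
      exact pow_le_pow_left₀ (le_of_lt h0) h3 2
  -- A * F q = A
  have hq1 : A * F q = A := by
    have hherm1 : ((1 : Matrix (Fin n) (Fin n) ℝ) - F q)ᴴ = 1 - F q := by
      rw [conjTranspose_sub, hFherm, conjTranspose_one]
    have h0 : (A * (1 - F q))ᴴ * (A * (1 - F q)) = 0 := by
      rw [conjTranspose_mul, hherm1, hE]
      calc F (fun i => 1 - q i) * Aᴴ * (A * F (fun i => 1 - q i))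
          = F (fun i => 1 - q i) * ((Aᴴ * A) * F (fun i => 1 - q i)) := by
            rw [Matrix.mul_assoc, ← Matrix.mul_assoc Aᴴ A _]
        _ = F (fun i => 1 - q i) * (F μ * F (fun i => 1 - q i)) := by rw [← hMdef, spec]
        _ = F (fun i => (1 - q i) * (μ i * (1 - q i))) := by rw [hFmul μ _, hFmul]
        _ = F (fun _ => 0) := by
            rw [show (fun i => (1 - q i) * (μ i * (1 - q i))) = (fun _ : Fin n => (0:ℝ)) from
              funext fun i => by
                by_cases h : μ i = 0
                · simp [h]
                · simp [hqdef, h]]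
        _ = 0 := hFzero
    have h1 : A * (1 - F q) = 0 := conjTranspose_mul_self_eq_zero.mp h0
    rw [Matrix.mul_sub, Matrix.mul_one] at h1
    exact (sub_eq_zero.mp h1).symm
  have hR' : (A * F g * Aᴴ) * (A * F g * Aᴴ) = A * Aᴴ := by
    calc (A * F g * Aᴴ) * (A * F g * Aᴴ)
        = A * (F g * ((Aᴴ * A) * (F g * Aᴴ))) := by simp only [Matrix.mul_assoc]
      _ = A * (F g * (F μ * (F g * Aᴴ))) := by rw [← hMdef, spec]
      _ = A * ((F g * (F μ * F g)) * Aᴴ) := by simp only [Matrix.mul_assoc]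
      _ = A * Aᴴ := by
          rw [hFmul μ g, hFmul g _,
            show (fun i => g i * (μ i * g i)) = q from funext fun i => by rw [← hgμg i]; ring,
            ← Matrix.mul_assoc, hq1]
  have hR'psd : (A * F g * Aᴴ).PosSemidef := (hFpsd g hgnn).mul_mul_conjTranspose_same A
  have hR'sqrt : A * F g * Aᴴ = (posSemidef_self_mul_conjTranspose A).sqrt :=
    hR'psd.eq_sqrt_of_sq_eq (posSemidef_self_mul_conjTranspose A) (by rw [pow_two]; exact hR')
  have htr : (A * F g * Aᴴ).trace = (F sμ).trace := by
    rw [trace_mul_cycle, ← hMdef, spec, hFmul,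
      show (fun i => μ i * g i) = sμ from funext fun i => by rw [← hgμ i]; ring]
  refine ⟨W, hWHcon, ?_, ?_⟩
  · exact hWA.trans hRsqrt
  · exact ((congrArg Matrix.trace hR'sqrt).symm).trans
      (htr.trans (congrArg Matrix.trace hRsqrt))

lemma col_mul (Amat B : Matrix (Fin n) (Fin n) ℝ) (j : Fin n) :
    (fun i => (Amat * B) i j) = Amat *ᵥ (fun i => B i j) := by
  funext i; simp [mul_apply, mulVec, dotProduct]

lemma trace_ct_mul_self (B : Matrix (Fin n) (Fin n) ℝ) :
    (Bᴴ * B).trace = ∑ j, (fun i => B i j) ⬝ᵥ (fun i => B i j) := by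
  simp [Matrix.trace, Matrix.diag, mul_apply, conjTranspose_apply, dotProduct]

lemma mulVec_dp_le_trace (E : Matrix (Fin n) (Fin n) ℝ) (v : Fin n → ℝ) (hv : v ⬝ᵥ v = 1) :
    (E *ᵥ v) ⬝ᵥ (E *ᵥ v) ≤ (Eᴴ * E).trace := by
  rw [trace_ct_mul_self]
  have h1 : ∀ i, (E *ᵥ v) i * (E *ᵥ v) i ≤ ∑ j, E i j * E i j := by
    intro i
    have h := Finset.sum_mul_sq_le_sq_mul_sq Finset.univ (fun j => E i j) v
    have hv2 : (∑ j, v j ^ 2) = 1 := by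
      have : v ⬝ᵥ v = ∑ j, v j ^ 2 := by simp [dotProduct, pow_two]
      rw [← this, hv]
    calc (E *ᵥ v) i * (E *ᵥ v) i = (∑ j, E i j * v j) ^ 2 := by
          simp [mulVec, dotProduct, pow_two]
    _ ≤ (∑ j, E i j ^ 2) * (∑ j, v j ^ 2) := h
    _ = ∑ j, E i j * E i j := by rw [hv2, mul_one]; simp [pow_two]
  calc (E *ᵥ v) ⬝ᵥ (E *ᵥ v) = ∑ i, (E *ᵥ v) i * (E *ᵥ v) i := rfl
  _ ≤ ∑ i, ∑ j, E i j * E i j := Finset.sum_le_sum fun i _ => h1 i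
  _ = ∑ j, ∑ i, E i j * E i j := Finset.sum_comm
  _ = _ := by simp [dotProduct]

lemma key {C T : Matrix (Fin n) (Fin n) ℝ} (hC : C.PosSemidef) (hT : T.PosSemidef)
    (v : Fin n → ℝ) (hv : v ⬝ᵥ v = 1) :
    nrm (T *ᵥ v) - nrm (C *ᵥ v) ≤
      Real.sqrt ((C * C).trace + (T * T).trace
        - 2 * (posSemidef_conjTranspose_mul_self (C * T)).sqrt.trace) := by
  obtain ⟨W, hWcon, hWA, -⟩ := polar (C * T)
  set R := (posSemidef_conjTranspose_mul_self (C * T)).sqrt with hRdef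
  have hCh : Cᴴ = C := hC.1
  have hTh : Tᴴ = T := hT.1
  set E := T - Wᴴ * C with hEdef
  have hcross : (T * (Wᴴ * C)).trace = R.trace := by
    rw [trace_mul_comm, Matrix.mul_assoc, hWA]
  have hcross2 : ((Wᴴ * C)ᴴ * T).trace = R.trace := by
    have h : ((Wᴴ * C)ᴴ * T)ᴴ = Tᴴ * (Wᴴ * C) := by
      rw [conjTranspose_mul, conjTranspose_conjTranspose]
    calc ((Wᴴ * C)ᴴ * T).trace = (((Wᴴ * C)ᴴ * T)ᴴ).trace := by
          rw [trace_conjTranspose, star_trivial]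
    _ = (Tᴴ * (Wᴴ * C)).trace := by rw [h]
    _ = R.trace := by rw [hTh, hcross]
  have hWWC : ((Wᴴ * C)ᴴ * (Wᴴ * C)).trace ≤ (C * C).trace := by
    rw [trace_ct_mul_self (Wᴴ * C), show (C * C).trace = (Cᴴ * C).trace by rw [hCh],
      trace_ct_mul_self C]
    refine Finset.sum_le_sum fun j _ => ?_
    rw [col_mul]
    exact hWcon _
  have hexp : Eᴴ * E = Tᴴ * T - Tᴴ * (Wᴴ * C) - ((Wᴴ * C)ᴴ * T - (Wᴴ * C)ᴴ * (Wᴴ * C)) := by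
    rw [hEdef, conjTranspose_sub, Matrix.sub_mul, Matrix.mul_sub, Matrix.mul_sub]
  have hEtr : (Eᴴ * E).trace ≤ (C * C).trace + (T * T).trace - 2 * R.trace := by
    rw [hexp, trace_sub, trace_sub, trace_sub, hcross2, hTh, hcross]
    linarith [hWWC]
  have hnE : nrm (E *ᵥ v) ≤
      Real.sqrt ((C * C).trace + (T * T).trace - 2 * R.trace) :=
    Real.sqrt_le_sqrt (le_trans (mulVec_dp_le_trace E v hv) hEtr)
  have hsplit : T *ᵥ v = E *ᵥ v + (Wᴴ * C) *ᵥ v := by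
    rw [hEdef, sub_mulVec]
    exact (sub_add_cancel _ _).symm
  have hWCv : nrm ((Wᴴ * C) *ᵥ v) ≤ nrm (C *ᵥ v) := by
    rw [← mulVec_mulVec]
    exact Real.sqrt_le_sqrt (hWcon (C *ᵥ v))
  have h5 : nrm (T *ᵥ v) ≤ nrm (E *ᵥ v) + nrm (C *ᵥ v) := by
    rw [hsplit]
    exact le_trans (nrm_triangle _ _) (by linarith)
  linarith

lemma inner_eq_dp (x y : EuclideanSpace ℝ (Fin n)) :
    (inner ℝ x y : ℝ) = (x : Fin n → ℝ) ⬝ᵥ (y : Fin n → ℝ) := by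
  simp [PiLp.inner_apply, dotProduct, RCLike.inner_apply, conj_trivial, mul_comm]

lemma rayleigh {A : Matrix (Fin n) (Fin n) ℝ} (hA : A.IsHermitian)
    (v : Fin n → ℝ) (hv : v ⬝ᵥ v = 1) :
    (⨅ i, hA.eigenvalues i) ≤ v ⬝ᵥ (A *ᵥ v) ∧ v ⬝ᵥ (A *ᵥ v) ≤ ⨆ i, hA.eigenvalues i := by
  rcases Nat.eq_zero_or_pos n with hn | hn
  · exfalso
    subst hn
    simp [dotProduct] at hv
  haveI : Nonempty (Fin n) := ⟨⟨0, hn⟩⟩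
  set b := hA.eigenvectorBasis with hbdef
  set μ := hA.eigenvalues with hμdef
  set c : Fin n → ℝ := fun i => (b i : Fin n → ℝ) ⬝ᵥ v with hcdef
  have hAv : ∀ i, (b i : Fin n → ℝ) ⬝ᵥ (A *ᵥ v) = μ i * c i := by
    intro i
    have h1 : (b i : Fin n → ℝ) ⬝ᵥ (Aᵀ *ᵥ v) = (A *ᵥ (b i : Fin n → ℝ)) ⬝ᵥ v :=
      dp_transpose A _ v
    rw [← ct_eq, hA.eq] at h1
    have h2 : (A *ᵥ (b i : Fin n → ℝ)) ⬝ᵥ v = (μ i • (b i : Fin n → ℝ)) ⬝ᵥ v :=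
      congrArg (· ⬝ᵥ v) (hA.mulVec_eigenvectorBasis i)
    rw [h1, h2, smul_dotProduct, smul_eq_mul]
  have hsum1 : v ⬝ᵥ (A *ᵥ v) = ∑ i, μ i * c i ^ 2 := by
    have h := b.sum_inner_mul_inner (WithLp.toLp 2 v)
      (WithLp.toLp 2 (A *ᵥ v))
    simp only [inner_eq_dp, WithLp.ofLp_toLp] at h
    rw [← h]
    refine Finset.sum_congr rfl fun i _ => ?_
    rw [hAv i, dotProduct_comm]
    ring
  have hsum2 : (∑ i, c i ^ 2) = 1 := by
    have h := b.sum_inner_mul_inner (WithLp.toLp 2 v)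
      (WithLp.toLp 2 v)
    simp only [inner_eq_dp, WithLp.ofLp_toLp] at h
    rw [hv] at h
    rw [← h]
    refine Finset.sum_congr rfl fun i _ => ?_
    rw [dotProduct_comm]
    ring
  have hbb : BddBelow (Set.range μ) := (Set.finite_range μ).bddBelow
  have hba : BddAbove (Set.range μ) := (Set.finite_range μ).bddAbove
  constructor
  · rw [hsum1]
    calc (⨅ i, μ i) = (⨅ i, μ i) * ∑ i, c i ^ 2 := by rw [hsum2, mul_one]
    _ = ∑ i, (⨅ j, μ j) * c i ^ 2 := by rw [Finset.mul_sum]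
    _ ≤ ∑ i, μ i * c i ^ 2 := by
        refine Finset.sum_le_sum fun i _ => ?_
        exact mul_le_mul_of_nonneg_right (ciInf_le hbb i) (sq_nonneg _)
  · rw [hsum1]
    calc (∑ i, μ i * c i ^ 2) ≤ ∑ i, (⨆ j, μ j) * c i ^ 2 :=
          Finset.sum_le_sum fun i _ =>
            mul_le_mul_of_nonneg_right (le_ciSup hba i) (sq_nonneg _)
    _ = (⨆ i, μ i) * ∑ i, c i ^ 2 := by rw [Finset.mul_sum]
    _ = ⨆ i, μ i := by rw [hsum2, mul_one]

lemma sqrt_congr {M N : Matrix (Fin n) (Fin n) ℝ} (h : M = N) (hM : M.PosSemidef)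
    (hN : N.PosSemidef) : hM.sqrt = hN.sqrt := by subst h; rfl

end BWAux




set_option maxHeartbeats 1600000 in
/-- Eigenvalue tube induced by a Bures–Wasserstein ball: if `B(X, X̂) ≤ θ` then
`(max{0, √λ_min(X̂) − θ})² ≤ λ_min(X) ≤ λ_max(X) ≤ (√λ_max(X̂) + θ)²`. -/
theorem bures_ball_eigenvalue_tube {n : ℕ} {X Xhat : Matrix (Fin n) (Fin n) ℝ}
    (hX : X.PosSemidef) (hXhat : Xhat.PosSemidef) (θ : ℝ) (hθ : 0 ≤ θ)
    (hball : bwDist hX hXhat ≤ θ) :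
    (max 0 (Real.sqrt (lamMin hXhat.1) - θ)) ^ 2 ≤ lamMin hX.1 ∧
    lamMin hX.1 ≤ lamMax hX.1 ∧
    lamMax hX.1 ≤ (Real.sqrt (lamMax hXhat.1) + θ) ^ 2 := by
  classical
  set C := hX.sqrt with hCdef
  set T := hXhat.sqrt with hTdef
  have hC : C.PosSemidef := hX.posSemidef_sqrt
  have hT : T.PosSemidef := hXhat.posSemidef_sqrt
  have hCC : C * C = X := hX.sqrt_mul_self
  have hTT : T * T = Xhat := hXhat.sqrt_mul_self
  have hCh : Cᴴ = C := hC.1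
  have hTh : Tᴴ = T := hT.1
  have hmid : T * X * T = (C * T)ᴴ * (C * T) := by
    rw [conjTranspose_mul, hCh, hTh, ← hCC]
    simp only [Matrix.mul_assoc]
  have hRtr : (midPosSemidef hX hXhat).sqrt.trace
      = (posSemidef_conjTranspose_mul_self (C * T)).sqrt.trace :=
    congrArg Matrix.trace (BWAux.sqrt_congr hmid _ _)
  have hbw : bwDist hX hXhat = Real.sqrt (X.trace + Xhat.trace -
      2 * (posSemidef_conjTranspose_mul_self (C * T)).sqrt.trace) := by
    unfold bwDist
    congr 1
    rw [trace_sub, trace_add, trace_smul, smul_eq_mul, hRtr]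
  have hdir1 : ∀ v : Fin n → ℝ, v ⬝ᵥ v = 1 →
      BWAux.nrm (T *ᵥ v) - BWAux.nrm (C *ᵥ v) ≤ θ := by
    intro v hv
    have h := BWAux.key hC hT v hv
    rw [hCC, hTT] at h
    calc BWAux.nrm (T *ᵥ v) - BWAux.nrm (C *ᵥ v) ≤ _ := h
    _ = bwDist hX hXhat := hbw.symm
    _ ≤ θ := hball
  have hdir2 : ∀ v : Fin n → ℝ, v ⬝ᵥ v = 1 →
      BWAux.nrm (C *ᵥ v) - BWAux.nrm (T *ᵥ v) ≤ θ := by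
    intro v hv
    have h := BWAux.key hT hC v hv
    rw [hCC, hTT] at h
    have h1 : (T * C)ᴴ * (T * C) = (C * T) * (C * T)ᴴ := by
      rw [conjTranspose_mul, hCh, hTh, conjTranspose_mul, hCh, hTh]
    obtain ⟨-, -, -, htrsym⟩ := BWAux.polar (C * T)
    have h2 : (posSemidef_conjTranspose_mul_self (T * C)).sqrt.trace
        = (posSemidef_conjTranspose_mul_self (C * T)).sqrt.trace := by
      calc (posSemidef_conjTranspose_mul_self (T * C)).sqrt.trace
          = (posSemidef_self_mul_conjTranspose (C * T)).sqrt.trace :=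
            congrArg Matrix.trace
              (BWAux.sqrt_congr h1 _ (posSemidef_self_mul_conjTranspose (C * T)))
        _ = _ := htrsym
    rw [h2, show Xhat.trace + X.trace = X.trace + Xhat.trace from add_comm _ _] at h
    calc BWAux.nrm (C *ᵥ v) - BWAux.nrm (T *ᵥ v) ≤ _ := h
    _ = bwDist hX hXhat := hbw.symm
    _ ≤ θ := hball
  rcases Nat.eq_zero_or_pos n with hn | hn
  · subst hn
    have h1 : lamMin hX.1 = 0 := Real.iInf_of_isEmpty _
    have h2 : lamMax hX.1 = 0 := Real.iSup_of_isEmpty _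
    have h3 : lamMin hXhat.1 = 0 := Real.iInf_of_isEmpty _
    have h4 : lamMax hXhat.1 = 0 := Real.iSup_of_isEmpty _
    rw [h1, h2, h3, h4, Real.sqrt_zero]
    refine ⟨?_, le_refl _, by positivity⟩
    rw [max_eq_left (by linarith)]
    simp
  · haveI : Nonempty (Fin n) := ⟨⟨0, hn⟩⟩
    obtain ⟨i0, -, hi0⟩ := Finset.exists_min_image Finset.univ hX.1.eigenvalues
      ⟨⟨0, hn⟩, Finset.mem_univ _⟩
    obtain ⟨i1, -, hi1⟩ := Finset.exists_max_image Finset.univ hX.1.eigenvalues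
      ⟨⟨0, hn⟩, Finset.mem_univ _⟩
    have hbb : BddBelow (Set.range hX.1.eigenvalues) :=
      (Set.finite_range _).bddBelow
    have hba : BddAbove (Set.range hX.1.eigenvalues) :=
      (Set.finite_range _).bddAbove
    have hlmin : lamMin hX.1 = hX.1.eigenvalues i0 :=
      le_antisymm (ciInf_le hbb i0) (le_ciInf fun j => hi0 j (Finset.mem_univ j))
    have hlmax : lamMax hX.1 = hX.1.eigenvalues i1 :=
      le_antisymm (ciSup_le fun j => hi1 j (Finset.mem_univ j)) (le_ciSup hba i1)
    have hunit : ∀ i : Fin n,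
        ((hX.1.eigenvectorBasis i : Fin n → ℝ)) ⬝ᵥ
          ((hX.1.eigenvectorBasis i : Fin n → ℝ)) = 1 := by
      intro i
      have h := hX.1.eigenvectorBasis.orthonormal.1 i
      have h2 := BWAux.inner_eq_dp (hX.1.eigenvectorBasis i) (hX.1.eigenvectorBasis i)
      rw [← h2, real_inner_self_eq_norm_sq, h, one_pow]
    have hCv : ∀ i : Fin n,
        BWAux.nrm (C *ᵥ (hX.1.eigenvectorBasis i : Fin n → ℝ)) =
          Real.sqrt (hX.1.eigenvalues i) := by
      intro i
      have h1 : (C *ᵥ (hX.1.eigenvectorBasis i : Fin n → ℝ)) ⬝ᵥ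
          (C *ᵥ (hX.1.eigenvectorBasis i : Fin n → ℝ)) =
          (hX.1.eigenvectorBasis i : Fin n → ℝ) ⬝ᵥ
            ((Cᴴ * C) *ᵥ (hX.1.eigenvectorBasis i : Fin n → ℝ)) :=
        BWAux.mulVec_sq C _
      rw [hCh, hCC] at h1
      have h2 : X *ᵥ (hX.1.eigenvectorBasis i : Fin n → ℝ)
          = hX.1.eigenvalues i • (hX.1.eigenvectorBasis i : Fin n → ℝ) :=
        hX.1.mulVec_eigenvectorBasis i
      unfold BWAux.nrm
      rw [h1, h2, dotProduct_smul, smul_eq_mul, hunit i, mul_one]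
    have hTv : ∀ i : Fin n,
        Real.sqrt (lamMin hXhat.1) ≤
            BWAux.nrm (T *ᵥ (hX.1.eigenvectorBasis i : Fin n → ℝ)) ∧
          BWAux.nrm (T *ᵥ (hX.1.eigenvectorBasis i : Fin n → ℝ)) ≤
            Real.sqrt (lamMax hXhat.1) := by
      intro i
      have hr := BWAux.rayleigh hXhat.1 (hX.1.eigenvectorBasis i : Fin n → ℝ) (hunit i)
      have h1 : (T *ᵥ (hX.1.eigenvectorBasis i : Fin n → ℝ)) ⬝ᵥ
          (T *ᵥ (hX.1.eigenvectorBasis i : Fin n → ℝ)) =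
          (hX.1.eigenvectorBasis i : Fin n → ℝ) ⬝ᵥ
            (Xhat *ᵥ (hX.1.eigenvectorBasis i : Fin n → ℝ)) := by
        rw [BWAux.mulVec_sq, hTh, hTT]
      constructor
      · exact Real.sqrt_le_sqrt (by rw [h1]; exact hr.1)
      · exact Real.sqrt_le_sqrt (by rw [h1]; exact hr.2)
    have hlow : (max 0 (Real.sqrt (lamMin hXhat.1) - θ)) ^ 2 ≤ lamMin hX.1 := by
      have h2 := (hTv i0).1
      have h3 := hCv i0
      have h4 : Real.sqrt (lamMin hXhat.1) - θ ≤ Real.sqrt (hX.1.eigenvalues i0) := by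
        have h5 := hdir1 (hX.1.eigenvectorBasis i0 : Fin n → ℝ) (hunit i0)
        rw [h3] at h5
        linarith
      have h6 : max 0 (Real.sqrt (lamMin hXhat.1) - θ)
          ≤ Real.sqrt (hX.1.eigenvalues i0) := max_le (Real.sqrt_nonneg _) h4
      rw [hlmin]
      calc (max 0 (Real.sqrt (lamMin hXhat.1) - θ)) ^ 2
          ≤ Real.sqrt (hX.1.eigenvalues i0) ^ 2 :=
            pow_le_pow_left₀ (le_max_left _ _) h6 2
      _ = hX.1.eigenvalues i0 := Real.sq_sqrt (hX.eigenvalues_nonneg i0)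
    have hup : lamMax hX.1 ≤ (Real.sqrt (lamMax hXhat.1) + θ) ^ 2 := by
      have h2 := (hTv i1).2
      have h3 := hCv i1
      have h4 : Real.sqrt (hX.1.eigenvalues i1)
          ≤ Real.sqrt (lamMax hXhat.1) + θ := by
        have h5 := hdir2 (hX.1.eigenvectorBasis i1 : Fin n → ℝ) (hunit i1)
        rw [h3] at h5
        linarith
      rw [hlmax]
      calc hX.1.eigenvalues i1
          = Real.sqrt (hX.1.eigenvalues i1) ^ 2 :=
            (Real.sq_sqrt (hX.eigenvalues_nonneg i1)).symm
      _ ≤ (Real.sqrt (lamMax hXhat.1) + θ) ^ 2 :=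
            pow_le_pow_left₀ (Real.sqrt_nonneg _) h4 2
    exact ⟨hlow, le_trans (ciInf_le hbb i0) (le_ciSup hba i0), hup⟩
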